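/- The axiom (A6_{I^u}) is valid in all topic-sensitive models: for any model M and world w, if M, w ⊨ φ ∧ ¬I^u φ̄ ∧ ¬I^u ψ̄ ∧ I^u(φ ∨ ψ), then M, w ⊨ I^u φ. -/
import Mathlib


/-- Formulas of the topic-sensitive languages, with ignorance operators
`Iw` (ignorance whether), `Iu` (unknown truth), `Id` (disbelieving ignorance),
and the grasping operator `G`. -/
inductive Form : Type where
  | var : ℕ → Form
  | neg : Form → Form
  | conj : Form → Form → Form
  | Iw : Form → Form
  | Iu : Form → Form
  | Id : Form → Form
  | G : Form → Form

def Form.disj (φ ψ : Form) : Form := .neg (.conj (.neg φ) (.neg ψ))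
def Form.impl (φ ψ : Form) : Form := .neg (.conj φ (.neg ψ))
def Form.iff (φ ψ : Form) : Form := .conj (φ.impl ψ) (ψ.impl φ)

/-- A topic model: topics `T`, an idempotent commutative associative fusion,
a designated topic `K` (the totality of grasped topics), and a topic
assignment to propositional variables. -/
structure TopicModel (T : Type) where
  fuse : T → T → T
  fuse_idem : ∀ a, fuse a a = a
  fuse_comm : ∀ a b, fuse a b = fuse b a
  fuse_assoc : ∀ a b c, fuse (fuse a b) c = fuse a (fuse b c)
  K : T
  tv : ℕ → T

/-- Topic parthood: `a ⊑ b` iff `a ⊕ b = b`. -/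
def TopicModel.part {T : Type} (TM : TopicModel T) (a b : T) : Prop :=
  TM.fuse a b = b

/-- Topic of a formula: fusion of the topics of its variables
(all operators are topic-transparent). -/
def TopicModel.t {T : Type} (TM : TopicModel T) : Form → T
  | .var p => TM.tv p
  | .neg φ => TM.t φ
  | .conj φ ψ => TM.fuse (TM.t φ) (TM.t ψ)
  | .Iw φ => TM.t φ
  | .Iu φ => TM.t φ
  | .Id φ => TM.t φ
  | .G φ => TM.t φ

/-- A topic-sensitive model. -/
structure TSModel (W T : Type) where
  ne : Nonempty W
  R : W → W → Prop
  v : ℕ → W → Prop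
  TM : TopicModel T

/-- Satisfaction in a topic-sensitive model. -/
def TSModel.sat {W T : Type} (M : TSModel W T) : W → Form → Prop
  | w, .var p => M.v p w
  | w, .neg φ => ¬ M.sat w φ
  | w, .conj φ ψ => M.sat w φ ∧ M.sat w ψ
  | w, .Iw φ => ¬ M.TM.part (M.TM.t φ) M.TM.K ∨
      ∃ w' w'', M.R w w' ∧ M.R w w'' ∧ M.sat w' φ ∧ ¬ M.sat w'' φ
  | w, .Iu φ => ¬ M.TM.part (M.TM.t φ) M.TM.K ∨
      (M.sat w φ ∧ ∃ w', M.R w w' ∧ ¬ M.sat w' φ)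
  | w, .Id φ => M.TM.part (M.TM.t φ) M.TM.K ∧ M.sat w φ ∧
      ∀ w', w' ≠ w → M.R w w' → ¬ M.sat w' φ
  | _, .G φ => M.TM.part (M.TM.t φ) M.TM.K

/-- `φ̄`: the conjunction of excluded-middle instances `x ∨ ¬x` over the
variables occurring in `φ`. -/
def Form.bar : Form → Form
  | .var p => (Form.var p).disj (Form.neg (Form.var p))
  | .neg φ => φ.bar
  | .conj φ ψ => .conj φ.bar ψ.bar
  | .Iw φ => φ.bar
  | .Iu φ => φ.bar
  | .Id φ => φ.bar
  | .G φ => φ.bar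

/-- Validity in all topic-sensitive models. -/
def TSValid (φ : Form) : Prop :=
  ∀ (W T : Type) (M : TSModel W T) (w : W), M.sat w φ


lemma t_bar_eq {T : Type} (TM : TopicModel T) (φ : Form) :
    TM.t φ.bar = TM.t φ := by
  induction φ with
  | var p => simp [Form.bar, Form.disj, TopicModel.t, TM.fuse_idem]
  | neg φ ih => exact ih
  | conj φ ψ ihφ ihψ => simp [Form.bar, TopicModel.t, ihφ, ihψ]
  | Iw φ ih => exact ih
  | Iu φ ih => exact ih
  | Id φ ih => exact ih
  | G φ ih => exact ih

lemma part_fuse {T : Type} (TM : TopicModel T) {a b k : T}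
    (ha : TM.part a k) (hb : TM.part b k) : TM.part (TM.fuse a b) k := by
  unfold TopicModel.part at *
  rw [TM.fuse_assoc, hb, ha]

/-- validity of (A6_{Iᵘ}). -/
theorem A6_Iu_valid {W T : Type} (M : TSModel W T) (w : W) (φ ψ : Form)
    (h : M.sat w (.conj φ (.conj (.neg (.Iu φ.bar))
      (.conj (.neg (.Iu ψ.bar)) (.Iu (φ.disj ψ)))))) :
    M.sat w (.Iu φ) := by
  obtain ⟨hφ, hbφ, hbψ, hI⟩ := h
  simp only [TSModel.sat, not_or, not_and] at hbφ hbψ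
  have pφ : M.TM.part (M.TM.t φ) M.TM.K := by
    have := hbφ.1; rwa [t_bar_eq, not_not] at this
  have pψ : M.TM.part (M.TM.t ψ) M.TM.K := by
    have := hbψ.1; rwa [t_bar_eq, not_not] at this
  rcases hI with hI | ⟨_, w', hR, hns⟩
  · exact absurd (part_fuse M.TM pφ pψ) (by simpa [Form.disj, TopicModel.t] using hI)
  · simp only [Form.disj, TSModel.sat, not_not] at hns
    exact Or.inr ⟨hφ, w', hR, hns.1⟩
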